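/- Let H_K and H_0 be Hilbert spaces with a continuous linear embedding E : H_K → H_0, and let Π be an orthogonal projector onto a closed subspace of H_K. Suppose there is ε > 0 such that ‖E(f − Πf)‖_0 ≤ ε‖f − Πf‖_K for all f ∈ H_K. Then for every f in the range of the adjoint E* , say f = E*(v) with v ∈ H_0, one has ‖E(f − Πf)‖_0 ≤ ε²‖v‖_0. -/

import Mathlib

open scoped RealInnerProductSpace

/-!
Write `e = f - Πf` for `f = E* v`. Since `e ⊥ range Π`, `‖e‖² = ⟪f, e⟫ = ⟪v, E e⟫ ≤ ‖v‖ ‖E e‖`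
(the duality, or Aubin–Nitsche, trick). Combined with `‖E e‖ ≤ ε ‖e‖` this gives
`‖E e‖² ≤ ε² ‖e‖² ≤ ε² ‖v‖ ‖E e‖`.
-/

theorem Submodule.inner_self_sub_starProjection {E : Type*} [NormedAddCommGroup E]
    [InnerProductSpace ℝ E] (K : Submodule ℝ E) [K.HasOrthogonalProjection] (f : E) :
    ⟪f, f - K.starProjection f⟫ = ‖f - K.starProjection f‖ ^ 2 := by
  set e := f - K.starProjection f with he
  have h_orth : ⟪K.starProjection f, e⟫ = 0 :=
    K.inner_right_of_mem_orthogonal (K.starProjection_apply_mem f)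
      (K.sub_starProjection_mem_orthogonal f)
  calc ⟪f, e⟫ = ⟪e, e⟫ + ⟪K.starProjection f, e⟫ := by rw [← inner_add_left, he, sub_add_cancel]
    _ = ‖e‖ ^ 2 := by rw [h_orth, add_zero, real_inner_self_eq_norm_sq]

theorem Submodule.norm_sq_sub_starProjection_adjoint_le {F G : Type*}
    [NormedAddCommGroup F] [InnerProductSpace ℝ F] [CompleteSpace F]
    [NormedAddCommGroup G] [InnerProductSpace ℝ G] [CompleteSpace G]
    (K : Submodule ℝ F) [K.HasOrthogonalProjection] (E : F →L[ℝ] G) (v : G) :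
    ‖E.adjoint v - K.starProjection (E.adjoint v)‖ ^ 2 ≤
      ‖v‖ * ‖E (E.adjoint v - K.starProjection (E.adjoint v))‖ := by
  rw [← K.inner_self_sub_starProjection, ContinuousLinearMap.adjoint_inner_left]
  exact real_inner_le_norm _ _

theorem le_sq_mul_of_le_mul_of_sq_le_mul {a b c ε : ℝ} (ha : 0 ≤ a) (hc : 0 ≤ c)
    (hab : a ≤ ε * b) (hb : b ^ 2 ≤ c * a) : a ≤ ε ^ 2 * c := by
  have ha_sq : a * a ≤ ε ^ 2 * c * a :=
    calc a * a = a ^ 2 := (sq a).symm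
      _ ≤ (ε * b) ^ 2 := pow_le_pow_left₀ ha hab 2
      _ = ε ^ 2 * b ^ 2 := mul_pow ε b 2
      _ ≤ ε ^ 2 * (c * a) := mul_le_mul_of_nonneg_left hb (sq_nonneg ε)
      _ = ε ^ 2 * c * a := (mul_assoc _ _ _).symm
  rcases ha.eq_or_lt with rfl | ha_pos
  · positivity
  · exact le_of_mul_le_mul_right ha_sq ha_pos

theorem abstract_superconvergence_general
    {HK H0 : Type*}
    [NormedAddCommGroup HK] [InnerProductSpace ℝ HK] [CompleteSpace HK]
    [NormedAddCommGroup H0] [InnerProductSpace ℝ H0] [CompleteSpace H0]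
    (E : HK →L[ℝ] H0)
    (S : Submodule ℝ HK) [CompleteSpace S]
    (ε : ℝ)
    (hstd : ∀ f : HK,
      ‖E (f - (Submodule.orthogonalProjectionOnto S f : HK))‖ ≤ ε * ‖f - (Submodule.orthogonalProjectionOnto S f : HK)‖) :
    ∀ v : H0,
      ‖E ((ContinuousLinearMap.adjoint E) v
        - (Submodule.orthogonalProjectionOnto S ((ContinuousLinearMap.adjoint E) v) : HK))‖
        ≤ ε ^ 2 * ‖v‖ := by
  intro v
  simp only [Submodule.coe_orthogonalProjectionOnto_apply] at hstd ⊢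
  exact le_sq_mul_of_le_mul_of_sq_le_mul (norm_nonneg _) (norm_nonneg v) (hstd _)
    (S.norm_sq_sub_starProjection_adjoint_le E v)

/-- Abstract superconvergence (Theorem 2.1): if the standard error bound
`‖E(f - Πf)‖₀ ≤ ε ‖f - Πf‖_K` holds for all `f`, then for `f = E* v` in the
range of the adjoint one gets the squared rate `‖E(f - Πf)‖₀ ≤ ε² ‖v‖₀`. -/
theorem abstract_superconvergence
    {HK H0 : Type*}
    [NormedAddCommGroup HK] [InnerProductSpace ℝ HK] [CompleteSpace HK]
    [NormedAddCommGroup H0] [InnerProductSpace ℝ H0] [CompleteSpace H0]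
    (E : HK →L[ℝ] H0)
    (S : Submodule ℝ HK) [CompleteSpace S]
    (ε : ℝ) (hε : 0 ≤ ε)
    (hstd : ∀ f : HK,
      ‖E (f - (Submodule.orthogonalProjectionOnto S f : HK))‖ ≤ ε * ‖f - (Submodule.orthogonalProjectionOnto S f : HK)‖) :
    ∀ v : H0,
      ‖E ((ContinuousLinearMap.adjoint E) v
        - (Submodule.orthogonalProjectionOnto S ((ContinuousLinearMap.adjoint E) v) : HK))‖
        ≤ ε ^ 2 * ‖v‖ :=
  abstract_superconvergence_general E S ε hstd
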